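/- Subject expansion: if Γ ⊢ (N, t) : κ and (M, s) → (N, t), then Γ ⊢ (M, s) : κ. -/

import Mathlib

open Classical

/-- Locations -/
abbrev Loc := ℕ

/-! ### Syntax of λimp (de Bruijn indices) -/

mutual
inductive Val : Type where
  | var : ℕ → Val
  | lam : Comp → Val
inductive Comp : Type where
  | ret  : Val → Comp                     -- unit V
  | bind : Comp → Val → Comp              -- M ⋆ V
  | get  : Loc → Comp → Comp              -- get_ℓ(λ.M)
  | set  : Loc → Val → Comp → Comp        -- set_ℓ(V, M)
end

/-! ### Store and lookup terms -/

mutual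
inductive Store : Type where
  | emp : Store
  | upd : Loc → Lkp → Store → Store       -- set_ℓ(u, s)
inductive Lkp : Type where
  | val : Val → Lkp
  | lkp : Loc → Store → Lkp               -- get_ℓ(s)
end

def Store.dom : Store → Finset Loc
  | .emp => ∅
  | .upd ℓ _ s => insert ℓ s.dom

/-- s ∖ ℓ -/
def Store.erase (ℓ : Loc) : Store → Store
  | .emp => .emp
  | .upd ℓ' u s => if ℓ' = ℓ then s.erase ℓ else .upd ℓ' u (s.erase ℓ)

/-! ### The equational store theory -/

mutual
/-- ⊢ s = t -/
inductive StEq : Store → Store → Prop where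
  | refl (s) : StEq s s
  | symm : StEq s t → StEq t s
  | trans : StEq s t → StEq t r → StEq s r
  | congr : LkEq u u' → StEq s s' → StEq (.upd ℓ u s) (.upd ℓ u' s')
  | setGet (h : ℓ ∈ s.dom) : StEq (.upd ℓ (.lkp ℓ s) s) s
  | overwrite : StEq (.upd ℓ u (.upd ℓ w s)) (.upd ℓ u s)
  | commute (h : ℓ ≠ ℓ') :
      StEq (.upd ℓ u (.upd ℓ' w s)) (.upd ℓ' w (.upd ℓ u s))
/-- ⊢ u = u' -/
inductive LkEq : Lkp → Lkp → Prop where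
  | refl (u) : LkEq u u
  | symm : LkEq u v → LkEq v u
  | trans : LkEq u v → LkEq v w → LkEq u w
  | congr (ℓ) (h : ℓ ∈ s.dom) : StEq s s' → LkEq (.lkp ℓ s) (.lkp ℓ s')
  | getSet : LkEq (.lkp ℓ (.upd ℓ u s)) u
  | getSetNe (h : ℓ ≠ ℓ') : LkEq (.lkp ℓ (.upd ℓ' u s)) (.lkp ℓ s)
end

/-- Extensional equivalence s ≃ t of store terms. -/
def StExtEq (s t : Store) : Prop :=
  s.dom = t.dom ∧ ∀ ℓ ∈ s.dom, LkEq (.lkp ℓ s) (.lkp ℓ t)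

/-! ### Normal forms of stores -/

def Store.size : Store → ℕ
  | .emp => 0
  | .upd _ _ s => s.size + 1

theorem Store.erase_size (ℓ : Loc) : (s : Store) → (s.erase ℓ).size ≤ s.size
  | .emp => le_refl _
  | .upd ℓ' u s => by
      unfold Store.erase
      by_cases h : ℓ' = ℓ
      · simpa [h, Store.size] using le_trans (Store.erase_size ℓ s) (Nat.le_succ _)
      · simpa [h, Store.size] using Nat.succ_le_succ (Store.erase_size ℓ s)

def Store.nf : Store → Store
  | .emp => .emp
  | .upd ℓ u s => .upd ℓ u ((s.erase ℓ).nf)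
termination_by s => s.size
decreasing_by
  simp only [Store.size]
  exact Nat.lt_succ_of_le (Store.erase_size ℓ s)

/-! ### Closedness -/

mutual
def Val.ClosedUnder : ℕ → Val → Prop
  | k, .var n => n < k
  | k, .lam M => Comp.ClosedUnder (k+1) M
def Comp.ClosedUnder : ℕ → Comp → Prop
  | k, .ret V => Val.ClosedUnder k V
  | k, .bind M V => Comp.ClosedUnder k M ∧ Val.ClosedUnder k V
  | k, .get _ M => Comp.ClosedUnder (k+1) M
  | k, .set _ V M => Val.ClosedUnder k V ∧ Comp.ClosedUnder k M
end

mutual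
def Store.Closed : Store → Prop
  | .emp => True
  | .upd _ u s => u.Closed ∧ s.Closed
def Lkp.Closed : Lkp → Prop
  | .val V => Val.ClosedUnder 0 V
  | .lkp _ s => s.Closed
end

/-! ### Substitution -/

mutual
def Val.shiftAux (c : ℕ) : Val → Val
  | .var n => if n < c then .var n else .var (n+1)
  | .lam M => .lam (Comp.shiftAux (c+1) M)
def Comp.shiftAux (c : ℕ) : Comp → Comp
  | .ret V => .ret (V.shiftAux c)
  | .bind M V => .bind (M.shiftAux c) (V.shiftAux c)
  | .get ℓ M => .get ℓ (M.shiftAux (c+1))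
  | .set ℓ V M => .set ℓ (V.shiftAux c) (M.shiftAux c)
end

mutual
/-- capture-avoiding substitution of `W` for the variable `k` in a value -/
def Val.substV (k : ℕ) (W : Val) : Val → Val
  | .var n => if n = k then W else if k < n then .var (n-1) else .var n
  | .lam M => .lam (Comp.substC (k+1) (Val.shiftAux 0 W) M)
/-- capture-avoiding substitution of `W` for the variable `k` in a computation: M[W/k] -/
def Comp.substC (k : ℕ) (W : Val) : Comp → Comp
  | .ret V => .ret (Val.substV k W V)
  | .bind M V => .bind (Comp.substC k W M) (Val.substV k W V)
  | .get ℓ M => .get ℓ (Comp.substC (k+1) (Val.shiftAux 0 W) M)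
  | .set ℓ V M => .set ℓ (Val.substV k W V) (Comp.substC k W M)
end

/-- simultaneous substitution of closed values for the free variables 0,…,n-1 -/
def msubst (Vs : List Val) (M : Comp) : Comp :=
  Vs.foldl (fun acc V => Comp.substC 0 V acc) M

/-! ### Small-step reduction on configurations -/

inductive Red : Comp × Store → Comp × Store → Prop where
  | beta : Red (.bind (.ret V) (.lam M), s) (Comp.substC 0 V M, s)
  | bindl : Red (M, s) (N, t) → Red (.bind M V, s) (.bind N V, t)
  | get : LkEq (.lkp ℓ s) (.val V) → Red (.get ℓ M, s) (Comp.substC 0 V M, s)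
  | set : Red (.set ℓ V M, s) (M, .upd ℓ (.val V) s)

/-- reflexive-transitive closure →* -/
def RedStar : Comp × Store → Comp × Store → Prop := Relation.ReflTransGen Red

/-! ### Big-step convergence -/

inductive BigStep : Comp → Store → Val → Store → Prop where
  | ret : BigStep (.ret V) s V s
  | bind : BigStep M s V s' → BigStep (Comp.substC 0 V N) s' W t →
      BigStep (.bind M (.lam N)) s W t
  | get : LkEq (.lkp ℓ s) (.val V) → BigStep (Comp.substC 0 V M) s W t →
      BigStep (.get ℓ M) s W t
  | set : BigStep M (.upd ℓ (.val V) s) W t → BigStep (.set ℓ V M) s W t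

/-- the partial function M(s): the result (V,t) if (M,s) ⇓ (V,t), and ⊥ (i.e. `none`) otherwise -/
noncomputable def run (M : Comp) (s : Store) : Option (Val × Store) :=
  if h : ∃ p : Val × Store, BigStep M s p.1 p.2 then some h.choose else none

/-! ### Intersection types of the four sorts -/

mutual
/-- value types δ -/
inductive TyD : Type where
  | arrow : TyD → TyT → TyD
  | inter : TyD → TyD → TyD
  | omega : TyD
/-- store types σ -/
inductive TyS : Type where
  | loc : Loc → TyD → TyS
  | inter : TyS → TyS → TyS
  | omega : TyS
/-- result types κ -/
inductive TyC : Type where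
  | prod : TyD → TyS → TyC
  | inter : TyC → TyC → TyC
  | omega : TyC
/-- computation types τ -/
inductive TyT : Type where
  | arrow : TyS → TyC → TyT
  | inter : TyT → TyT → TyT
  | omega : TyT
end

def TyS.domS : TyS → Finset Loc
  | .loc ℓ _ => {ℓ}
  | .inter σ σ' => σ.domS ∪ σ'.domS
  | .omega => ∅

/-! ### Subtyping -/

mutual
inductive SubD : TyD → TyD → Prop where
  | refl (δ) : SubD δ δ
  | trans : SubD δ₁ δ₂ → SubD δ₂ δ₃ → SubD δ₁ δ₃
  | leOmega (δ) : SubD δ .omega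
  | interLeft : SubD (TyD.inter δ δ') δ
  | interRight : SubD (TyD.inter δ δ') δ'
  | interGlb : SubD δ δ₁ → SubD δ δ₂ → SubD δ (TyD.inter δ₁ δ₂)
  | interMono : SubD δ₁ δ₁' → SubD δ₂ δ₂' → SubD (TyD.inter δ₁ δ₂) (TyD.inter δ₁' δ₂')
  | omegaArrow : SubD .omega (.arrow .omega .omega)
  | arrowInter : SubD ((TyD.arrow δ τ).inter (.arrow δ τ')) (TyD.arrow δ (TyT.inter τ τ'))
  | arrowMono : SubD δ' δ → SubT τ τ' → SubD (.arrow δ τ) (.arrow δ' τ')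
inductive SubS : TyS → TyS → Prop where
  | refl (σ) : SubS σ σ
  | trans : SubS σ₁ σ₂ → SubS σ₂ σ₃ → SubS σ₁ σ₃
  | leOmega (σ) : SubS σ .omega
  | interLeft : SubS (TyS.inter σ σ') σ
  | interRight : SubS (TyS.inter σ σ') σ'
  | interGlb : SubS σ σ₁ → SubS σ σ₂ → SubS σ (TyS.inter σ₁ σ₂)
  | interMono : SubS σ₁ σ₁' → SubS σ₂ σ₂' → SubS (TyS.inter σ₁ σ₂) (TyS.inter σ₁' σ₂')
  | locInter : SubS ((TyS.loc ℓ δ).inter (.loc ℓ δ')) (TyS.loc ℓ (TyD.inter δ δ'))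
  | locMono : SubD δ δ' → SubS (.loc ℓ δ) (.loc ℓ δ')
inductive SubC : TyC → TyC → Prop where
  | refl (κ) : SubC κ κ
  | trans : SubC κ₁ κ₂ → SubC κ₂ κ₃ → SubC κ₁ κ₃
  | leOmega (κ) : SubC κ .omega
  | interLeft : SubC (TyC.inter κ κ') κ
  | interRight : SubC (TyC.inter κ κ') κ'
  | interGlb : SubC κ κ₁ → SubC κ κ₂ → SubC κ (TyC.inter κ₁ κ₂)
  | interMono : SubC κ₁ κ₁' → SubC κ₂ κ₂' → SubC (TyC.inter κ₁ κ₂) (TyC.inter κ₁' κ₂')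
  | omegaProd : SubC .omega (.prod .omega .omega)
  | prodInter : SubC ((TyC.prod δ σ).inter (.prod δ' σ')) (TyC.prod (TyD.inter δ δ') (TyS.inter σ σ'))
  | prodMono : SubD δ δ' → SubS σ σ' → SubC (.prod δ σ) (.prod δ' σ')
inductive SubT : TyT → TyT → Prop where
  | refl (τ) : SubT τ τ
  | trans : SubT τ₁ τ₂ → SubT τ₂ τ₃ → SubT τ₁ τ₃
  | leOmega (τ) : SubT τ .omega
  | interLeft : SubT (TyT.inter τ τ') τ
  | interRight : SubT (TyT.inter τ τ') τ'
  | interGlb : SubT τ τ₁ → SubT τ τ₂ → SubT τ (TyT.inter τ₁ τ₂)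
  | interMono : SubT τ₁ τ₁' → SubT τ₂ τ₂' → SubT (TyT.inter τ₁ τ₂) (TyT.inter τ₁' τ₂')
  | omegaArrow : SubT .omega (.arrow .omega .omega)
  | arrowInter : SubT ((TyT.arrow σ κ).inter (.arrow σ κ')) (TyT.arrow σ (TyC.inter κ κ'))
  | arrowMono : SubS σ' σ → SubC κ κ' → SubT (.arrow σ κ) (.arrow σ' κ')
end

/-! ### Finite intersections -/

def InterD (l : List TyD) : TyD := l.foldr TyD.inter TyD.omega
def InterS (l : List TyS) : TyS := l.foldr TyS.inter TyS.omega
def InterC (l : List TyC) : TyC := l.foldr TyC.inter TyC.omega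
def InterT (l : List TyT) : TyT := l.foldr TyT.inter TyT.omega

/-! ### Type assignment -/

/-- typing contexts (de Bruijn) -/
abbrev Ctx := List TyD

mutual
inductive TypV : Ctx → Val → TyD → Prop where
  | var : Γ[n]? = some δ → TypV Γ (.var n) δ
  | lam : TypC (δ :: Γ) M τ → TypV Γ (.lam M) (.arrow δ τ)
  | omega : TypV Γ V .omega
  | inter : TypV Γ V δ → TypV Γ V δ' → TypV Γ V (TyD.inter δ δ')
  | sub : TypV Γ V δ → SubD δ δ' → TypV Γ V δ'
inductive TypC : Ctx → Comp → TyT → Prop where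
  | ret : TypV Γ V δ → TypC Γ (.ret V) (.arrow σ (.prod δ σ))
  | bind : TypC Γ M (.arrow σ (.prod δ' σ')) →
      TypV Γ V (.arrow δ' (.arrow σ' (.prod δ'' σ''))) →
      TypC Γ (.bind M V) (.arrow σ (.prod δ'' σ''))
  | get : TypC (δ :: Γ) M (.arrow σ κ) →
      TypC Γ (.get ℓ M) (.arrow ((TyS.loc ℓ δ).inter σ) κ)
  | set : TypV Γ V δ → TypC Γ M (.arrow ((TyS.loc ℓ δ).inter σ) κ) →
      ℓ ∉ σ.domS → TypC Γ (.set ℓ V M) (.arrow σ κ)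
  | omega : TypC Γ M .omega
  | inter : TypC Γ M τ → TypC Γ M τ' → TypC Γ M (TyT.inter τ τ')
  | sub : TypC Γ M τ → SubT τ τ' → TypC Γ M τ'
end

mutual
inductive TypS : Ctx → Store → TyS → Prop where
  | updA : TypL Γ u δ → TypS Γ (.upd ℓ u s) (.loc ℓ δ)
  | updB : TypS Γ s (.loc ℓ' δ) → ℓ ≠ ℓ' → TypS Γ (.upd ℓ u s) (.loc ℓ' δ)
  | omega : TypS Γ s .omega
  | inter : TypS Γ s σ → TypS Γ s σ' → TypS Γ s (TyS.inter σ σ')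
  | sub : TypS Γ s σ → SubS σ σ' → TypS Γ s σ'
inductive TypL : Ctx → Lkp → TyD → Prop where
  | val : TypV Γ V δ → TypL Γ (.val V) δ
  | lkp : TypS Γ s (.loc ℓ δ) → TypL Γ (.lkp ℓ s) δ
  | omega : TypL Γ u .omega
  | inter : TypL Γ u δ → TypL Γ u δ' → TypL Γ u (TyD.inter δ δ')
  | sub : TypL Γ u δ → SubD δ δ' → TypL Γ u δ'
end

inductive TypConf : Ctx → Comp → Store → TyC → Prop where
  | conf : TypC Γ M (.arrow σ κ) → TypS Γ s σ → TypConf Γ M s κ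
  | omega : TypConf Γ M s .omega
  | inter : TypConf Γ M s κ → TypConf Γ M s κ' → TypConf Γ M s (TyC.inter κ κ')
  | sub : TypConf Γ M s κ → SubC κ κ' → TypConf Γ M s κ'

/-! ### Saturated sets -/

mutual
def SatD : TyD → Set Val
  | .omega => {V | Val.ClosedUnder 0 V}
  | .arrow δ τ =>
      {V | Val.ClosedUnder 0 V ∧ ∀ W ∈ SatD δ, Comp.bind (.ret W) V ∈ SatT τ}
  | .inter δ δ' => SatD δ ∩ SatD δ'
def SatS : TyS → Set Store
  | .omega => {s | s.Closed}
  | .loc ℓ δ =>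
      {s | s.Closed ∧ ℓ ∈ s.dom ∧ ∃ V ∈ SatD δ, LkEq (.lkp ℓ s) (.val V)}
  | .inter σ σ' => SatS σ ∩ SatS σ'
def SatC : TyC → Set (Option (Val × Store))
  | .omega => {r | ∀ V t, r = some (V, t) → Val.ClosedUnder 0 V ∧ Store.Closed t}
  | .prod δ σ => {r | ∃ V t, r = some (V, t) ∧ V ∈ SatD δ ∧ t ∈ SatS σ}
  | .inter κ κ' => SatC κ ∩ SatC κ'
def SatT : TyT → Set Comp
  | .omega => {M | Comp.ClosedUnder 0 M}
  | .arrow σ κ => {M | Comp.ClosedUnder 0 M ∧ ∀ s ∈ SatS σ, run M s ∈ SatC κ}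
  | .inter τ τ' => SatT τ ∩ SatT τ'
end

/-!
Subject expansion is checked for each reduction rule. For (β) and (get) the key is the converse
of the substitution lemma: from `Γ ⊢ M[V/x] : τ` one reads off a type `δ` of `V` (the
intersection of the types of its occurrences, `ω` if there are none) with `Γ, x:δ ⊢ M : τ`.
For (get) one also needs that typing of lookup terms is invariant under the store theory, which
turns `⊢ get_ℓ(s) = V` and `V : δ` into `s : ⟨ℓ:δ⟩`; that `ℓ ∈ dom(s)` is read off a model of the
theory. For (set), a store type `σ` of `set_ℓ(u, s)` splits into its component `σ(ℓ)`, a type of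
`u`, and the rest `σ ∖ ℓ`, a type of `s`. For a reduction inside `M ⋆ V`, the types of a
configuration are closed under `∧`, `ω` and `≤`, so a typing of `N ⋆ V` decomposes into instances
of (bind), each of which is transported back along the reduction of `N`.
-/

def TyC.prodOmega : TyC := .prod .omega .omega

theorem SubC.le_prodOmega (κ : TyC) : SubC κ .prodOmega :=
  (SubC.leOmega κ).trans SubC.omegaProd

theorem SubT.le_arrow_prodOmega (τ : TyT) (σ : TyS) : SubT τ (.arrow σ .prodOmega) :=
  ((SubT.leOmega τ).trans SubT.omegaArrow).trans (.arrowMono (.leOmega σ) SubC.omegaProd)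

/-- `τ.app σ` is the least result type of `τ` on stores of type `σ`:
`τ ≤ σ → κ` iff `τ.app σ ≤ κ`. The conjunct `ωD × ωS` makes it monotone in `τ`. -/
noncomputable def TyT.app (σ : TyS) : TyT → TyC
  | .arrow σ₀ κ => if SubS σ σ₀ then .inter κ .prodOmega else .prodOmega
  | .inter τ τ' => .inter (τ.app σ) (τ'.app σ)
  | .omega => .prodOmega

namespace TyT

variable {σ : TyS}

theorem le_arrow_app : ∀ τ : TyT, SubT τ (.arrow σ (τ.app σ))
  | .arrow σ₀ κ => by
      simp only [app]
      split_ifs with h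
      · exact (SubT.interGlb (.arrowMono h (.refl κ)) (.le_arrow_prodOmega _ σ)).trans
          SubT.arrowInter
      · exact .le_arrow_prodOmega _ σ
  | .inter τ τ' => (SubT.interMono (le_arrow_app τ) (le_arrow_app τ')).trans SubT.arrowInter
  | .omega => .le_arrow_prodOmega _ σ

theorem app_mono : ∀ {τ τ' : TyT}, SubT τ τ' → SubC (τ.app σ) (τ'.app σ)
  | _, _, .refl _ => .refl _
  | _, _, .trans h h' => (app_mono h).trans (app_mono h')
  | _, _, .leOmega _ => .le_prodOmega _
  | _, _, .interLeft => .interLeft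
  | _, _, .interRight => .interRight
  | _, _, .interGlb h h' => .interGlb (app_mono h) (app_mono h')
  | _, _, .interMono h h' => .interMono (app_mono h) (app_mono h')
  | _, _, .omegaArrow => by
      simp only [app, if_pos (SubS.leOmega σ)]
      exact .interGlb (.leOmega _) (.refl _)
  | _, _, .arrowInter => by
      simp only [app]
      split_ifs
      · exact .interGlb (.interMono .interLeft .interLeft) (.trans .interLeft .interRight)
      · exact .interLeft
  | _, _, .arrowMono (σ' := σ₁) hσ hκ => by
      simp only [app]
      by_cases h : SubS σ σ₁
      · rw [if_pos (h.trans hσ), if_pos h]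
        exact .interMono hκ (.refl _)
      · rw [if_neg h]
        exact .le_prodOmega _

end TyT

theorem SubT.app_le {τ : TyT} {σ : TyS} {κ : TyC} (h : SubT τ (.arrow σ κ)) :
    SubC (τ.app σ) κ := by
  have := TyT.app_mono (σ := σ) h
  rw [TyT.app, if_pos (.refl σ)] at this
  exact this.trans .interLeft

def TyS.lookup (ℓ : Loc) : TyS → TyD
  | .loc ℓ' δ => if ℓ' = ℓ then δ else .omega
  | .inter σ σ' => .inter (σ.lookup ℓ) (σ'.lookup ℓ)
  | .omega => .omega

def TyS.erase (ℓ : Loc) : TyS → TyS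
  | .loc ℓ' δ => if ℓ' = ℓ then .omega else .loc ℓ' δ
  | .inter σ σ' => .inter (σ.erase ℓ) (σ'.erase ℓ)
  | .omega => .omega

namespace TyS

variable {ℓ : Loc}

theorem lookup_mono : ∀ {σ σ' : TyS}, SubS σ σ' → SubD (σ.lookup ℓ) (σ'.lookup ℓ)
  | _, _, .refl _ => .refl _
  | _, _, .trans h h' => (lookup_mono h).trans (lookup_mono h')
  | _, _, .leOmega _ => .leOmega _
  | _, _, .interLeft => .interLeft
  | _, _, .interRight => .interRight
  | _, _, .interGlb h h' => .interGlb (lookup_mono h) (lookup_mono h')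
  | _, _, .interMono h h' => .interMono (lookup_mono h) (lookup_mono h')
  | _, _, .locInter => by
      simp only [lookup]
      split_ifs
      · exact .refl _
      · exact .interLeft
  | _, _, .locMono h => by
      simp only [lookup]
      split_ifs
      · exact h
      · exact .refl _

theorem erase_mono : ∀ {σ σ' : TyS}, SubS σ σ' → SubS (σ.erase ℓ) (σ'.erase ℓ)
  | _, _, .refl _ => .refl _
  | _, _, .trans h h' => (erase_mono h).trans (erase_mono h')
  | _, _, .leOmega _ => .leOmega _
  | _, _, .interLeft => .interLeft
  | _, _, .interRight => .interRight
  | _, _, .interGlb h h' => .interGlb (erase_mono h) (erase_mono h')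
  | _, _, .interMono h h' => .interMono (erase_mono h) (erase_mono h')
  | _, _, .locInter => by
      simp only [erase]
      split_ifs
      · exact .interLeft
      · exact .locInter
  | _, _, .locMono h => by
      simp only [erase]
      split_ifs
      · exact .refl _
      · exact .locMono h

theorem not_mem_domS_erase : ∀ σ : TyS, ℓ ∉ (σ.erase ℓ).domS
  | .loc ℓ' δ => by
      simp only [erase]
      split_ifs with h
      · simp [domS]
      · simpa [domS] using Ne.symm h
  | .inter σ σ' => by
      simpa [erase, domS] using ⟨not_mem_domS_erase σ, not_mem_domS_erase σ'⟩
  | .omega => by simp [erase, domS]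

theorem loc_lookup_inter_erase_le : ∀ σ : TyS, SubS ((loc ℓ (σ.lookup ℓ)).inter (σ.erase ℓ)) σ
  | .loc ℓ' δ => by
      simp only [lookup, erase]
      split_ifs with h
      · exact h ▸ .interLeft
      · exact .interRight
  | .inter σ σ' => .interGlb
      ((SubS.interMono (.locMono .interLeft) .interLeft).trans (loc_lookup_inter_erase_le σ))
      ((SubS.interMono (.locMono .interRight) .interRight).trans (loc_lookup_inter_erase_le σ'))
  | .omega => .leOmega _

theorem le_erase : ∀ σ : TyS, SubS σ (σ.erase ℓ)
  | .loc ℓ' δ => by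
      simp only [erase]
      split_ifs
      · exact .leOmega _
      · exact .refl _
  | .inter σ σ' => .interMono (le_erase σ) (le_erase σ')
  | .omega => .refl _

theorem erase_erase : ∀ σ : TyS, (σ.erase ℓ).erase ℓ = σ.erase ℓ
  | .loc ℓ' δ => by by_cases h : ℓ' = ℓ <;> simp [erase, h]
  | .inter σ σ' => by rw [erase, erase, erase_erase σ, erase_erase σ']
  | .omega => rfl

theorem erase_comm (ℓ' : Loc) : ∀ σ : TyS, (σ.erase ℓ').erase ℓ = (σ.erase ℓ).erase ℓ'
  | .loc ℓ₀ δ => by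
      simp only [erase]
      split_ifs <;> simp_all [erase]
  | .inter σ σ' => by rw [erase, erase, erase, erase, erase_comm ℓ' σ, erase_comm ℓ' σ']
  | .omega => rfl

theorem lookup_erase_of_ne {ℓ' : Loc} (h : ℓ ≠ ℓ') : ∀ σ : TyS, (σ.erase ℓ').lookup ℓ = σ.lookup ℓ
  | .loc ℓ₀ δ => by
      simp only [erase]
      split_ifs with h'
      · simp [lookup, h' ▸ Ne.symm h]
      · rfl
  | .inter σ σ' => by rw [erase, lookup, lookup, lookup_erase_of_ne h σ, lookup_erase_of_ne h σ']
  | .omega => rfl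

end TyS

theorem TypL.val_inv {Γ : Ctx} {V : Val} : ∀ {u : Lkp} {δ : TyD}, TypL Γ u δ → u = .val V →
    TypV Γ V δ
  | _, _, .val h, rfl => h
  | _, _, .omega, _ => .omega
  | _, _, .inter h h', hu => .inter (val_inv h hu) (val_inv h' hu)
  | _, _, .sub h hδ, hu => .sub (val_inv h hu) hδ

namespace TypS

variable {Γ : Ctx} {ℓ : Loc} {u : Lkp} {s : Store}

theorem upd_inv : ∀ {t : Store} {σ : TyS}, TypS Γ t σ → t = .upd ℓ u s →
    TypL Γ u (σ.lookup ℓ) ∧ TypS Γ s (σ.erase ℓ)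
  | _, _, .updA h, rfl => by
      simp only [TyS.lookup, TyS.erase]
      exact ⟨h, .omega⟩
  | _, _, .updB h hne, rfl => by
      simp only [TyS.lookup, TyS.erase, if_neg (Ne.symm hne)]
      exact ⟨.omega, h⟩
  | _, _, .omega, _ => ⟨.omega, .omega⟩
  | _, _, .inter h h', ht =>
      ⟨.inter (upd_inv h ht).1 (upd_inv h' ht).1, .inter (upd_inv h ht).2 (upd_inv h' ht).2⟩
  | _, _, .sub h hσ, ht =>
      ⟨.sub (upd_inv h ht).1 (TyS.lookup_mono hσ), .sub (upd_inv h ht).2 (TyS.erase_mono hσ)⟩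

theorem upd_of : ∀ {σ : TyS}, TypL Γ u (σ.lookup ℓ) → TypS Γ s (σ.erase ℓ) →
    TypS Γ (.upd ℓ u s) σ
  | .loc ℓ' δ, hu, hs => by
      by_cases h : ℓ' = ℓ
      · subst h
        simp only [TyS.lookup, ↓reduceIte] at hu
        exact .updA hu
      · simp only [TyS.erase, if_neg h] at hs
        exact .updB hs (Ne.symm h)
  | .inter σ σ', hu, hs => .inter (upd_of (.sub hu .interLeft) (.sub hs .interLeft))
      (upd_of (.sub hu .interRight) (.sub hs .interRight))
  | .omega, _, _ => .omega

theorem upd_iff {σ : TyS} :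
    TypS Γ (.upd ℓ u s) σ ↔ TypL Γ u (σ.lookup ℓ) ∧ TypS Γ s (σ.erase ℓ) :=
  ⟨(upd_inv · rfl), fun h => upd_of h.1 h.2⟩

theorem upd_of_not_mem_domS : ∀ {σ : TyS}, ℓ ∉ σ.domS → TypS Γ s σ → TypS Γ (.upd ℓ u s) σ
  | .loc ℓ' δ, hℓ, h => .updB h (by simpa [TyS.domS] using hℓ)
  | .inter σ σ', hℓ, h => by
      simp only [TyS.domS, Finset.mem_union, not_or] at hℓ
      exact .inter (upd_of_not_mem_domS hℓ.1 (.sub h .interLeft))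
        (upd_of_not_mem_domS hℓ.2 (.sub h .interRight))
  | .omega, _, _ => .omega

theorem loc_omega_of_mem_dom : ∀ {s : Store}, ℓ ∈ s.dom → TypS Γ s (.loc ℓ .omega)
  | .upd ℓ' _ s, h => by
      by_cases hℓ : ℓ' = ℓ
      · exact hℓ ▸ .updA .omega
      · have : ℓ ∈ s.dom := by simpa [Store.dom, Ne.symm hℓ] using h
        exact .updB (loc_omega_of_mem_dom this) hℓ

theorem loc_lookup (hℓ : ℓ ∈ s.dom) : ∀ {σ : TyS}, TypS Γ s σ → TypS Γ s (.loc ℓ (σ.lookup ℓ))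
  | .loc ℓ' δ, h => by
      simp only [TyS.lookup]
      split_ifs with h'
      · exact h' ▸ h
      · exact loc_omega_of_mem_dom hℓ
  | .inter σ σ', h => .sub (.inter (loc_lookup hℓ (.sub h .interLeft))
      (loc_lookup hℓ (.sub h .interRight))) .locInter
  | .omega, _ => loc_omega_of_mem_dom hℓ

end TypS

theorem TypL.lkp_inv {Γ : Ctx} {ℓ : Loc} {s : Store} : ∀ {u : Lkp} {δ : TyD}, TypL Γ u δ →
    u = .lkp ℓ s → SubD .omega δ ∨ TypS Γ s (.loc ℓ δ)
  | _, _, .lkp h, rfl => .inr h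
  | _, _, .omega, _ => .inl (.refl _)
  | _, _, .inter h h', hu => by
      rcases lkp_inv h hu with hω | hs <;> rcases lkp_inv h' hu with hω' | hs'
      · exact .inl (.interGlb hω hω')
      · exact .inr (.sub hs' (.locMono (.interGlb ((SubD.leOmega _).trans hω) (.refl _))))
      · exact .inr (.sub hs (.locMono (.interGlb (.refl _) ((SubD.leOmega _).trans hω'))))
      · exact .inr (.sub (.inter hs hs') .locInter)
  | _, _, .sub h hδ, hu => (lkp_inv h hu).imp (·.trans hδ) (.sub · (.locMono hδ))

theorem TypL.lkp_iff {Γ : Ctx} {ℓ : Loc} {s : Store} {δ : TyD} :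
    TypL Γ (.lkp ℓ s) δ ↔ SubD .omega δ ∨ TypS Γ s (.loc ℓ δ) :=
  ⟨(lkp_inv · rfl), fun h => h.elim (.sub .omega) .lkp⟩

theorem TypS.loc_of_typL_lkp {Γ : Ctx} {ℓ : Loc} {s : Store} {δ : TyD} (hℓ : ℓ ∈ s.dom)
    (h : TypL Γ (.lkp ℓ s) δ) : TypS Γ s (.loc ℓ δ) :=
  (h.lkp_inv rfl).elim (fun hω => .sub (loc_omega_of_mem_dom hℓ) (.locMono hω)) id

namespace TypS

variable {Γ : Ctx} {ℓ : Loc} {u w : Lkp} {s : Store} {σ : TyS}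

theorem upd_lkp_self_iff (hℓ : ℓ ∈ s.dom) : TypS Γ (.upd ℓ (.lkp ℓ s) s) σ ↔ TypS Γ s σ := by
  rw [upd_iff]
  constructor
  · rintro ⟨hu, hs⟩
    exact .sub (.inter (loc_of_typL_lkp hℓ hu) hs) (TyS.loc_lookup_inter_erase_le σ)
  · intro h
    exact ⟨.lkp (loc_lookup hℓ h), .sub h (TyS.le_erase σ)⟩

theorem upd_upd_self_iff : TypS Γ (.upd ℓ u (.upd ℓ w s)) σ ↔ TypS Γ (.upd ℓ u s) σ := by
  rw [upd_iff, upd_iff, upd_iff, TyS.erase_erase]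
  exact and_congr_right fun _ =>
    ⟨(·.2), fun h => ⟨(upd_iff.mp (upd_of_not_mem_domS (TyS.not_mem_domS_erase σ) h)).1, h⟩⟩

theorem upd_upd_comm {ℓ' : Loc} (hne : ℓ ≠ ℓ') (h : TypS Γ (.upd ℓ u (.upd ℓ' w s)) σ) :
    TypS Γ (.upd ℓ' w (.upd ℓ u s)) σ := by
  obtain ⟨hu, hws⟩ := upd_iff.mp h
  obtain ⟨hw, hs⟩ := upd_iff.mp hws
  rw [TyS.lookup_erase_of_ne hne.symm] at hw
  refine upd_of hw (upd_of ?_ ?_)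
  · rwa [TyS.lookup_erase_of_ne hne]
  · rwa [TyS.erase_comm]

end TypS

namespace TypL

variable {Γ : Ctx} {ℓ : Loc} {u : Lkp} {s : Store} {δ : TyD}

theorem lkp_upd_self_iff : TypL Γ (.lkp ℓ (.upd ℓ u s)) δ ↔ TypL Γ u δ := by
  rw [lkp_iff, TypS.upd_iff]
  simp only [TyS.lookup, TyS.erase, ↓reduceIte]
  exact ⟨fun h => h.elim (.sub .omega) (·.1), fun h => .inr ⟨h, .omega⟩⟩

theorem lkp_upd_of_ne_iff {ℓ' : Loc} (hne : ℓ ≠ ℓ') :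
    TypL Γ (.lkp ℓ (.upd ℓ' u s)) δ ↔ TypL Γ (.lkp ℓ s) δ := by
  rw [lkp_iff, lkp_iff, TypS.upd_iff]
  simp only [TyS.lookup, TyS.erase, if_neg hne]
  exact or_congr_right ⟨(·.2), fun h => ⟨.omega, h⟩⟩

end TypL

mutual

theorem StEq.typS_iff {Γ : Ctx} : ∀ {s t : Store}, StEq s t → ∀ {σ : TyS},
    TypS Γ s σ ↔ TypS Γ t σ
  | _, _, .refl _ => .rfl
  | _, _, .symm h => (StEq.typS_iff h).symm
  | _, _, .trans h h' => (StEq.typS_iff h).trans (StEq.typS_iff h')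
  | _, _, .congr hu hs => TypS.upd_iff.trans
      ((and_congr (LkEq.typL_iff hu) (StEq.typS_iff hs)).trans TypS.upd_iff.symm)
  | _, _, .setGet hℓ => TypS.upd_lkp_self_iff hℓ
  | _, _, .overwrite => TypS.upd_upd_self_iff
  | _, _, .commute hne => ⟨TypS.upd_upd_comm hne, TypS.upd_upd_comm hne.symm⟩

theorem LkEq.typL_iff {Γ : Ctx} : ∀ {u v : Lkp}, LkEq u v → ∀ {δ : TyD},
    TypL Γ u δ ↔ TypL Γ v δ
  | _, _, .refl _ => .rfl
  | _, _, .symm h => (LkEq.typL_iff h).symm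
  | _, _, .trans h h' => (LkEq.typL_iff h).trans (LkEq.typL_iff h')
  | _, _, .congr _ _ hs => TypL.lkp_iff.trans ((or_congr_right (StEq.typS_iff hs)).trans
      TypL.lkp_iff.symm)
  | _, _, .getSet => TypL.lkp_upd_self_iff
  | _, _, .getSetNe hne => TypL.lkp_upd_of_ne_iff hne

end

mutual

/-- A model of the store theory: `s.lookup ℓ` is the value last stored at `ℓ`. -/
def Store.lookup : Store → Loc → Option Val
  | .emp, _ => none
  | .upd ℓ' u s, ℓ => if ℓ' = ℓ then u.value else s.lookup ℓ

def Lkp.value : Lkp → Option Val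
  | .val V => some V
  | .lkp ℓ s => s.lookup ℓ

end

theorem Store.mem_dom_of_lookup_eq_some {ℓ : Loc} {V : Val} :
    ∀ {s : Store}, s.lookup ℓ = some V → ℓ ∈ s.dom
  | .upd ℓ' _ s, h => by
      rw [Store.lookup] at h
      split_ifs at h with hℓ
      · simp [Store.dom, hℓ]
      · exact Finset.mem_insert_of_mem (mem_dom_of_lookup_eq_some h)

mutual

theorem StEq.lookup_eq : ∀ {s t : Store}, StEq s t → ∀ ℓ, s.lookup ℓ = t.lookup ℓ
  | _, _, .refl _, _ => rfl
  | _, _, .symm h, ℓ => (StEq.lookup_eq h ℓ).symm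
  | _, _, .trans h h', ℓ => (StEq.lookup_eq h ℓ).trans (StEq.lookup_eq h' ℓ)
  | _, _, .congr hu hs, ℓ => by simp only [Store.lookup, LkEq.value_eq hu, StEq.lookup_eq hs ℓ]
  | _, _, .setGet _, ℓ => by
      simp only [Store.lookup, Lkp.value]
      split_ifs with h
      · rw [h]
      · rfl
  | _, _, .overwrite, ℓ => by
      simp only [Store.lookup]
      split_ifs <;> rfl
  | _, _, .commute hne, ℓ => by
      simp only [Store.lookup]
      split_ifs with h h' <;> first | rfl | exact absurd (h.trans h'.symm) hne

theorem LkEq.value_eq : ∀ {u v : Lkp}, LkEq u v → u.value = v.value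
  | _, _, .refl _ => rfl
  | _, _, .symm h => (LkEq.value_eq h).symm
  | _, _, .trans h h' => (LkEq.value_eq h).trans (LkEq.value_eq h')
  | _, _, .congr ℓ _ hs => StEq.lookup_eq hs ℓ
  | _, _, .getSet => by simp only [Lkp.value, Store.lookup, ↓reduceIte]
  | _, _, .getSetNe hne => by simp only [Lkp.value, Store.lookup, if_neg hne.symm]

end

theorem LkEq.mem_dom {ℓ : Loc} {s : Store} {V : Val} (h : LkEq (.lkp ℓ s) (.val V)) :
    ℓ ∈ s.dom :=
  Store.mem_dom_of_lookup_eq_some h.value_eq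

theorem List.Forall₂.exists_getElem?_of_right {α β : Type*} {R : α → β → Prop} :
    ∀ {l₁ : List α} {l₂ : List β}, List.Forall₂ R l₁ l₂ → ∀ {n : ℕ} {b : β},
      l₂[n]? = some b → ∃ a, l₁[n]? = some a ∧ R a b
  | _, _, .nil, _, _, h => by simp at h
  | _, _, .cons hab _, 0, _, h => by
      obtain rfl := Option.some.inj h
      exact ⟨_, rfl, hab⟩
  | _, _, .cons _ hl, _ + 1, _, h => hl.exists_getElem?_of_right h

namespace List

variable {α : Type*} {l₁ l₂ : List α} {a : α} {n : ℕ}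

theorem getElem?_append_cons_of_lt (h : n < l₁.length) :
    (l₁ ++ a :: l₂)[n]? = (l₁ ++ l₂)[n]? := by
  rw [getElem?_append_left h, getElem?_append_left h]

theorem getElem?_append_cons_succ (h : l₁.length ≤ n) :
    (l₁ ++ a :: l₂)[n + 1]? = (l₁ ++ l₂)[n]? := by
  rw [getElem?_append_right (by omega), getElem?_append_right h, Nat.sub_add_comm h,
    getElem?_cons_succ]

theorem getElem?_append_cons_length : (l₁ ++ a :: l₂)[l₁.length]? = some a := by
  simp

end List

instance : Std.Refl SubD := ⟨SubD.refl⟩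

mutual

theorem TypV.ctx_mono {Γ Γ' : Ctx} {V : Val} {δ : TyD} (hΓ : List.Forall₂ SubD Γ' Γ) :
    TypV Γ V δ → TypV Γ' V δ
  | .var h =>
      have ⟨_, h', hδ⟩ := hΓ.exists_getElem?_of_right h
      .sub (.var h') hδ
  | .lam h => .lam (TypC.ctx_mono (.cons (.refl _) hΓ) h)
  | .omega => .omega
  | .inter h h' => .inter (TypV.ctx_mono hΓ h) (TypV.ctx_mono hΓ h')
  | .sub h hδ => .sub (TypV.ctx_mono hΓ h) hδ

theorem TypC.ctx_mono {Γ Γ' : Ctx} {M : Comp} {τ : TyT} (hΓ : List.Forall₂ SubD Γ' Γ) :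
    TypC Γ M τ → TypC Γ' M τ
  | .ret h => .ret (TypV.ctx_mono hΓ h)
  | .bind h h' => .bind (TypC.ctx_mono hΓ h) (TypV.ctx_mono hΓ h')
  | .get h => .get (TypC.ctx_mono (.cons (.refl _) hΓ) h)
  | .set h h' hℓ => .set (TypV.ctx_mono hΓ h) (TypC.ctx_mono hΓ h') hℓ
  | .omega => .omega
  | .inter h h' => .inter (TypC.ctx_mono hΓ h) (TypC.ctx_mono hΓ h')
  | .sub h hτ => .sub (TypC.ctx_mono hΓ h) hτ

end

theorem forall₂_subD_append_cons {Γ₁ Γ₂ : Ctx} {δ δ' : TyD} (h : SubD δ δ') :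
    List.Forall₂ SubD (Γ₁ ++ δ :: Γ₂) (Γ₁ ++ δ' :: Γ₂) :=
  List.rel_append (List.forall₂_refl Γ₁) (.cons h (List.forall₂_refl Γ₂))

mutual

theorem TypV.of_shiftAux : ∀ {Γ : Ctx} {W : Val} {δ : TyD}, TypV Γ W δ →
    ∀ {Δ₁ Δ₂ : Ctx} {δ' : TyD} {V : Val}, Γ = Δ₁ ++ δ' :: Δ₂ → W = V.shiftAux Δ₁.length →
      TypV (Δ₁ ++ Δ₂) V δ
  | _, _, _, .var h, _, _, _, V, rfl, hW => by
      cases V with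
      | var m =>
          simp only [Val.shiftAux] at hW
          split_ifs at hW with hm <;> cases hW
          · exact .var (by rwa [List.getElem?_append_cons_of_lt hm] at h)
          · exact .var (by rwa [List.getElem?_append_cons_succ (by omega)] at h)
      | lam => cases hW
  | _, _, _, .lam h, _, _, _, V, hΓ, hW => by
      cases V with
      | var m =>
          simp only [Val.shiftAux] at hW
          split_ifs at hW
      | lam M => exact .lam (TypC.of_shiftAux (Δ₁ := _ :: _) h (congrArg _ hΓ) (Val.lam.inj hW))
  | _, _, _, .omega, _, _, _, _, _, _ => .omega
  | _, _, _, .inter h h', _, _, _, _, hΓ, hW =>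
      .inter (TypV.of_shiftAux h hΓ hW) (TypV.of_shiftAux h' hΓ hW)
  | _, _, _, .sub h hδ, _, _, _, _, hΓ, hW => .sub (TypV.of_shiftAux h hΓ hW) hδ

theorem TypC.of_shiftAux : ∀ {Γ : Ctx} {P : Comp} {τ : TyT}, TypC Γ P τ →
    ∀ {Δ₁ Δ₂ : Ctx} {δ' : TyD} {M : Comp}, Γ = Δ₁ ++ δ' :: Δ₂ → P = M.shiftAux Δ₁.length →
      TypC (Δ₁ ++ Δ₂) M τ
  | _, _, _, .ret h, _, _, _, M, hΓ, hP => by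
      cases M with
      | ret V => exact .ret (TypV.of_shiftAux h hΓ (Comp.ret.inj hP))
      | _ => cases hP
  | _, _, _, .bind h h', _, _, _, M, hΓ, hP => by
      cases M with
      | bind M V =>
          have ⟨hM, hV⟩ := Comp.bind.inj hP
          exact .bind (TypC.of_shiftAux h hΓ hM) (TypV.of_shiftAux h' hΓ hV)
      | _ => cases hP
  | _, _, _, .get h, _, _, _, M, hΓ, hP => by
      cases M with
      | get ℓ M =>
          have ⟨hℓ, hM⟩ := Comp.get.inj hP
          exact hℓ ▸ .get (TypC.of_shiftAux (Δ₁ := _ :: _) h (congrArg _ hΓ) hM)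
      | _ => cases hP
  | _, _, _, .set h h' hℓ, _, _, _, M, hΓ, hP => by
      cases M with
      | set ℓ V M =>
          have ⟨hℓ', hV, hM⟩ := Comp.set.inj hP
          exact hℓ' ▸ .set (TypV.of_shiftAux h hΓ hV) (TypC.of_shiftAux h' hΓ hM) hℓ
      | _ => cases hP
  | _, _, _, .omega, _, _, _, _, _, _ => .omega
  | _, _, _, .inter h h', _, _, _, _, hΓ, hP =>
      .inter (TypC.of_shiftAux h hΓ hP) (TypC.of_shiftAux h' hΓ hP)
  | _, _, _, .sub h hτ, _, _, _, _, hΓ, hP => .sub (TypC.of_shiftAux h hΓ hP) hτ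

end

theorem TypV.of_substV_var_self {Γ Γ' Γ₀ : Ctx} {P W : Val} {δ : TyD} (h : TypV Γ P δ)
    (hP : P = Val.substV Γ'.length W (.var Γ'.length)) :
    ∃ δ₀, TypV Γ W δ₀ ∧ TypV (Γ' ++ δ₀ :: Γ₀) (.var Γ'.length) δ := by
  rw [Val.substV, if_pos rfl] at hP
  exact ⟨δ, hP ▸ h, .var List.getElem?_append_cons_length⟩

mutual

theorem TypV.of_substV : ∀ {Γ : Ctx} {P : Val} {δ : TyD}, TypV Γ P δ →
    ∀ {Γ' Γ₀ : Ctx} {W V : Val}, Γ = Γ' ++ Γ₀ → P = Val.substV Γ'.length W V →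
      ∃ δ₀, TypV Γ W δ₀ ∧ TypV (Γ' ++ δ₀ :: Γ₀) V δ
  | _, _, _, .var h, Γ', _, _, V, hΓ, hP => by
      subst hΓ
      rcases V with n | M
      · rcases lt_trichotomy n Γ'.length with hn | rfl | hn
        · rw [Val.substV, if_neg hn.ne, if_neg (by omega)] at hP
          cases hP
          exact ⟨.omega, .omega, .var (by rwa [List.getElem?_append_cons_of_lt hn])⟩
        · exact TypV.of_substV_var_self (.var h) hP
        · rw [Val.substV, if_neg hn.ne', if_pos hn] at hP
          cases hP
          obtain ⟨n, rfl⟩ := Nat.exists_eq_add_of_lt hn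
          refine ⟨.omega, .omega, .var ?_⟩
          rw [List.getElem?_append_cons_succ (by omega)]
          simpa using h
      · cases hP
  | _, _, _, .lam h, Γ', _, W, V, hΓ, hP => by
      rcases V with n | M
      · by_cases hn : n = Γ'.length
        · exact hn ▸ TypV.of_substV_var_self (.lam h) (hn ▸ hP)
        · rw [Val.substV, if_neg hn] at hP
          split_ifs at hP
      · obtain ⟨δ₀, hW, hM⟩ :=
          TypC.of_substC (Γ' := _ :: Γ') h (congrArg _ hΓ) (Val.lam.inj hP)
        exact ⟨δ₀, TypV.of_shiftAux (Δ₁ := []) hW rfl rfl, .lam hM⟩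
  | _, _, _, .omega, _, _, _, _, _, _ => ⟨.omega, .omega, .omega⟩
  | _, _, _, .inter h h', _, _, _, _, hΓ, hP =>
      have ⟨δ₁, hW₁, hV₁⟩ := TypV.of_substV h hΓ hP
      have ⟨δ₂, hW₂, hV₂⟩ := TypV.of_substV h' hΓ hP
      ⟨.inter δ₁ δ₂, .inter hW₁ hW₂, .inter (hV₁.ctx_mono (forall₂_subD_append_cons .interLeft))
        (hV₂.ctx_mono (forall₂_subD_append_cons .interRight))⟩
  | _, _, _, .sub h hδ, _, _, _, _, hΓ, hP =>
      have ⟨δ₀, hW, hV⟩ := TypV.of_substV h hΓ hP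
      ⟨δ₀, hW, .sub hV hδ⟩

theorem TypC.of_substC : ∀ {Γ : Ctx} {P : Comp} {τ : TyT}, TypC Γ P τ →
    ∀ {Γ' Γ₀ : Ctx} {W : Val} {M : Comp}, Γ = Γ' ++ Γ₀ → P = M.substC Γ'.length W →
      ∃ δ₀, TypV Γ W δ₀ ∧ TypC (Γ' ++ δ₀ :: Γ₀) M τ
  | _, _, _, .ret h, _, _, _, M, hΓ, hP => by
      cases M with
      | ret V =>
          have ⟨δ₀, hW, hV⟩ := TypV.of_substV h hΓ (Comp.ret.inj hP)
          exact ⟨δ₀, hW, .ret hV⟩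
      | _ => cases hP
  | _, _, _, .bind h h', _, _, _, M, hΓ, hP => by
      cases M with
      | bind M V =>
          have ⟨hM, hV⟩ := Comp.bind.inj hP
          have ⟨δ₁, hW₁, hM₁⟩ := TypC.of_substC h hΓ hM
          have ⟨δ₂, hW₂, hV₂⟩ := TypV.of_substV h' hΓ hV
          exact ⟨.inter δ₁ δ₂, .inter hW₁ hW₂,
            .bind (hM₁.ctx_mono (forall₂_subD_append_cons .interLeft))
              (hV₂.ctx_mono (forall₂_subD_append_cons .interRight))⟩
      | _ => cases hP
  | _, _, _, .get h, Γ', _, _, M, hΓ, hP => by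
      cases M with
      | get ℓ M =>
          have ⟨hℓ, hM⟩ := Comp.get.inj hP
          have ⟨δ₀, hW, hM⟩ := TypC.of_substC (Γ' := _ :: Γ') h (congrArg _ hΓ) hM
          exact ⟨δ₀, TypV.of_shiftAux (Δ₁ := []) hW rfl rfl, hℓ ▸ .get hM⟩
      | _ => cases hP
  | _, _, _, .set h h' hℓ, _, _, _, M, hΓ, hP => by
      cases M with
      | set ℓ V M =>
          have ⟨hℓ', hV, hM⟩ := Comp.set.inj hP
          have ⟨δ₁, hW₁, hV₁⟩ := TypV.of_substV h hΓ hV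
          have ⟨δ₂, hW₂, hM₂⟩ := TypC.of_substC h' hΓ hM
          exact ⟨.inter δ₁ δ₂, .inter hW₁ hW₂, hℓ' ▸
            .set (hV₁.ctx_mono (forall₂_subD_append_cons .interLeft))
              (hM₂.ctx_mono (forall₂_subD_append_cons .interRight)) hℓ⟩
      | _ => cases hP
  | _, _, _, .omega, _, _, _, _, _, _ => ⟨.omega, .omega, .omega⟩
  | _, _, _, .inter h h', _, _, _, _, hΓ, hP =>
      have ⟨δ₁, hW₁, hM₁⟩ := TypC.of_substC h hΓ hP
      have ⟨δ₂, hW₂, hM₂⟩ := TypC.of_substC h' hΓ hP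
      ⟨.inter δ₁ δ₂, .inter hW₁ hW₂, .inter (hM₁.ctx_mono (forall₂_subD_append_cons .interLeft))
        (hM₂.ctx_mono (forall₂_subD_append_cons .interRight))⟩
  | _, _, _, .sub h hτ, _, _, _, _, hΓ, hP =>
      have ⟨δ₀, hW, hM⟩ := TypC.of_substC h hΓ hP
      ⟨δ₀, hW, .sub hM hτ⟩

end

theorem TypC.of_substC_zero {Γ : Ctx} {M : Comp} {V : Val} {τ : TyT}
    (h : TypC Γ (M.substC 0 V) τ) : ∃ δ, TypV Γ V δ ∧ TypC (δ :: Γ) M τ :=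
  TypC.of_substC (Γ' := []) h rfl rfl

namespace TypConf

variable {Γ : Ctx} {M : Comp} {s : Store}

theorem exists_typC : ∀ {κ : TyC}, TypConf Γ M s κ → ∃ σ, TypC Γ M (.arrow σ κ) ∧ TypS Γ s σ
  | _, .conf hM hs => ⟨_, hM, hs⟩
  | _, .omega => ⟨.omega, .sub .omega .omegaArrow, .omega⟩
  | _, .inter h h' =>
      have ⟨_, hM, hs⟩ := exists_typC h
      have ⟨_, hM', hs'⟩ := exists_typC h'
      ⟨_, .sub (.inter (.sub hM (.arrowMono .interLeft (.refl _)))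
        (.sub hM' (.arrowMono .interRight (.refl _)))) .arrowInter, .inter hs hs'⟩
  | _, .sub h hκ =>
      have ⟨_, hM, hs⟩ := exists_typC h
      ⟨_, .sub hM (.arrowMono (.refl _) hκ), hs⟩

theorem prodOmega : TypConf Γ M s .prodOmega := .sub .omega SubC.omegaProd

/-- The types of a configuration form a filter, so a typing of `N ⋆ V` can be split into the
premises of the (bind) rules it is built from. -/
theorem of_typC_bind {N : Comp} {V : Val} {σ : TyS}
    (H : ∀ {δ' σ' δ'' σ''}, TypC Γ N (.arrow σ (.prod δ' σ')) →
      TypV Γ V (.arrow δ' (.arrow σ' (.prod δ'' σ''))) → TypConf Γ M s (.prod δ'' σ'')) :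
    ∀ {P : Comp} {τ : TyT}, TypC Γ P τ → P = .bind N V →
      ∀ {κ : TyC}, SubT τ (.arrow σ κ) → TypConf Γ M s κ
  | _, _, .bind hN hV, hP, _, hτ => by
      obtain ⟨rfl, rfl⟩ := Comp.bind.inj hP
      have hκ := hτ.app_le
      simp only [TyT.app] at hκ
      split_ifs at hκ with hσ
      · exact .sub (.inter (H (.sub hN (.arrowMono hσ (.refl _))) hV) prodOmega) hκ
      · exact .sub prodOmega hκ
  | _, _, .omega, _, _, hτ => .sub prodOmega hτ.app_le
  | _, _, .inter h h', hP, _, hτ =>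
      .sub (.inter (of_typC_bind H h hP (TyT.le_arrow_app _))
        (of_typC_bind H h' hP (TyT.le_arrow_app _))) hτ.app_le
  | _, _, .sub h hτ', hP, _, hτ => of_typC_bind H h hP (hτ'.trans hτ)

theorem bind_ret_lam {V : Val} {δ : TyD} {σ : TyS} (hV : TypV Γ V δ) (hs : TypS Γ s σ) :
    ∀ {κ : TyC}, TypC (δ :: Γ) M (.arrow σ κ) → TypConf Γ (.bind (.ret V) (.lam M)) s κ
  | .prod _ _, hM => .conf (.bind (.ret hV) (.lam hM)) hs
  | .inter _ _, hM => .inter (bind_ret_lam hV hs (.sub hM (.arrowMono (.refl σ) .interLeft)))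
      (bind_ret_lam hV hs (.sub hM (.arrowMono (.refl σ) .interRight)))
  | .omega, _ => .omega

variable {V : Val} {κ : TyC}

theorem expand_beta (h : TypConf Γ (M.substC 0 V) s κ) :
    TypConf Γ (.bind (.ret V) (.lam M)) s κ :=
  have ⟨_, hM, hs⟩ := h.exists_typC
  have ⟨_, hV, hM⟩ := TypC.of_substC_zero hM
  bind_ret_lam hV hs hM

theorem expand_bind {N : Comp} {t : Store} (ih : ∀ {κ}, TypConf Γ N t κ → TypConf Γ M s κ)
    (h : TypConf Γ (.bind N V) t κ) : TypConf Γ (.bind M V) s κ :=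
  have ⟨_, hNV, ht⟩ := h.exists_typC
  of_typC_bind (fun hN hV =>
      have ⟨_, hM, hs⟩ := (ih (.conf hN ht)).exists_typC
      .conf (.bind hM hV) hs)
    hNV rfl (.refl _)

theorem expand_get {ℓ : Loc} (hV : LkEq (.lkp ℓ s) (.val V))
    (h : TypConf Γ (M.substC 0 V) s κ) : TypConf Γ (.get ℓ M) s κ :=
  have ⟨_, hM, hs⟩ := h.exists_typC
  have ⟨_, hVδ, hM⟩ := TypC.of_substC_zero hM
  .conf (.get hM) (.inter (.loc_of_typL_lkp hV.mem_dom (hV.typL_iff.mpr (.val hVδ))) hs)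

theorem expand_set {ℓ : Loc} (h : TypConf Γ M (.upd ℓ (.val V) s) κ) :
    TypConf Γ (.set ℓ V M) s κ :=
  have ⟨σ, hM, hs⟩ := h.exists_typC
  have ⟨hV, hs⟩ := TypS.upd_iff.mp hs
  .conf (.set (hV.val_inv rfl) (.sub hM (.arrowMono (TyS.loc_lookup_inter_erase_le σ) (.refl κ)))
    (TyS.not_mem_domS_erase σ)) hs

end TypConf

/-- subject expansion. -/
theorem subject_expansion {Γ : Ctx} {M N : Comp} {s t : Store} {κ : TyC}
    (h : TypConf Γ N t κ) (hr : Red (M, s) (N, t)) :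
    TypConf Γ M s κ := by
  suffices ∀ {p q : Comp × Store}, Red p q → ∀ {κ}, TypConf Γ q.1 q.2 κ → TypConf Γ p.1 p.2 κ from
    this hr h
  intro p q hr
  induction hr with
  | beta => exact TypConf.expand_beta
  | bindl _ ih => exact TypConf.expand_bind ih
  | get hV => exact TypConf.expand_get hV
  | set => exact TypConf.expand_set
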